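/- arXiv:2112.05994 — 10 statements merged into one kernel-verified Lean document; each statement's English description precedes it below -/
import Mathlib

section
/- In the lower-bound instance for the social welfare price of JR: let k = s^2 for some integer s > 1, with k voters and candidates {a_1,...,a_k, b_1,...,b_{k-s}}, where voters 1..s each approve all of {a_1,...,a_k} and voter s+i approves only {b_i} for i = 1,...,k-s. Then any size-k committee providing JR must contain all of b_1,...,b_{k-s}, and consequently has social welfare at most 2k - sqrt(k), while the committee {a_1,...,a_k} has social welfare k*sqrt(k). -/
/-- Social welfare of a committee `W`: total number of approvals of its members. -/
def swF {V C : Type*} [Fintype V] [DecidableEq C] (A : V → Finset C) (W : Finset C) : ℕ :=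
  ∑ i : V, ((A i) ∩ W).card

/-- `W` provides justified representation: every cohesive group of at least
`n/k` voters (i.e. with `n ≤ k * |N'|`) contains a represented voter. -/
def providesJR {V C : Type*} [Fintype V] [DecidableEq C] (A : V → Finset C) (k : ℕ)
    (W : Finset C) : Prop :=
  ∀ N' : Finset V, Fintype.card V ≤ k * N'.card →
    (∃ c : C, ∀ i ∈ N', c ∈ A i) → ∃ i ∈ N', ((A i) ∩ W).Nonempty

/-! Since `n = k`, a single voter already forms a group of `n/k` voters, so JR forces every
`b_j`, each the sole approval of its voter, into the committee. That leaves `s` seats for the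
`a`-candidates: each of the first `s` voters then approves at most `s` members and every other
voter at most one, giving `s·s + (k - s) = 2k - s`. -/

open Finset

theorem providesJR.inter_nonempty {V C : Type*} [Fintype V] [DecidableEq C] {A : V → Finset C}
    {k : ℕ} {W : Finset C} (hW : providesJR A k W) (hk : Fintype.card V ≤ k) {i : V}
    (hi : (A i).Nonempty) : (A i ∩ W).Nonempty := by
  obtain ⟨c, hc⟩ := hi
  obtain ⟨i', hi', hrep⟩ := hW {i} (by simpa using hk) ⟨c, by simpa using hc⟩
  rwa [mem_singleton.mp hi'] at hrep

theorem providesJR.mem_of_eq_singleton {V C : Type*} [Fintype V] [DecidableEq C]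
    {A : V → Finset C} {k : ℕ} {W : Finset C} (hW : providesJR A k W)
    (hk : Fintype.card V ≤ k) {i : V} {c : C} (hi : A i = {c}) : c ∈ W := by
  obtain ⟨x, hx⟩ := hW.inter_nonempty hk (i := i) (by simp [hi])
  rw [hi, mem_inter, mem_singleton] at hx
  exact hx.1 ▸ hx.2

theorem Finset.card_image_inl_inter_add_card_le {α β : Type*} [Fintype α] [Fintype β]
    [DecidableEq (α ⊕ β)] {W : Finset (α ⊕ β)} (hW : ∀ b, Sum.inr b ∈ W) :
    #(univ.image Sum.inl ∩ W) + Fintype.card β ≤ #W := by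
  have hdisj : Disjoint (univ.image Sum.inl ∩ W) (univ.image (Sum.inr : β → α ⊕ β)) := by
    simp [disjoint_left]
  have hsub : univ.image Sum.inl ∩ W ∪ univ.image Sum.inr ⊆ W :=
    union_subset inter_subset_right (by simpa [subset_iff] using hW)
  simpa [card_union_of_disjoint hdisj, card_image_of_injective _ Sum.inr_injective]
    using card_le_card hsub

theorem Fin.sum_ite_val_lt {M : Type*} [AddCommMonoid M] {k s : ℕ} (h : s ≤ k) (x y : M) :
    ∑ i : Fin k, (if (i : ℕ) < s then x else y) = s • x + (k - s) • y := by
  rw [Fin.sum_univ_eq_sum_range (fun i => if i < s then x else y), ← sum_range_add_sum_Ico _ h,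
    sum_congr rfl fun i hi => if_pos (mem_range.mp hi),
    sum_congr rfl fun i hi => if_neg (mem_Ico.mp hi).1.not_gt]
  simp

section LowerBoundInstance

variable {s k : ℕ} {A : Fin k → Finset (Fin k ⊕ Fin (k - s))}

theorem approvals_add_eq_singleton (hA2 : ∀ i : Fin k, s ≤ (i : ℕ) →
      ∀ c, c ∈ A i ↔ ∃ j : Fin (k - s), c = Sum.inr j ∧ (i : ℕ) = s + (j : ℕ))
    (j : Fin (k - s)) : A ⟨s + j, by omega⟩ = {Sum.inr j} := by
  ext c
  rw [hA2 _ (Nat.le_add_right _ _), mem_singleton]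
  constructor
  · rintro ⟨j', rfl, hj'⟩
    exact congrArg Sum.inr (Fin.ext (by simpa using hj'.symm))
  · rintro rfl
    exact ⟨j, rfl, rfl⟩

theorem exists_approvals_eq_singleton (hA2 : ∀ i : Fin k, s ≤ (i : ℕ) →
      ∀ c, c ∈ A i ↔ ∃ j : Fin (k - s), c = Sum.inr j ∧ (i : ℕ) = s + (j : ℕ))
    {i : Fin k} (hi : s ≤ (i : ℕ)) : ∃ j : Fin (k - s), A i = {Sum.inr j} := by
  obtain ⟨i, hik⟩ := i
  obtain ⟨j, rfl⟩ := Nat.exists_eq_add_of_le hi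
  exact ⟨⟨j, by omega⟩, approvals_add_eq_singleton hA2 ⟨j, by omega⟩⟩

end LowerBoundInstance

theorem stmt0_general (s k : ℕ) (hk : k = s ^ 2)
    (A : Fin k → Finset (Fin k ⊕ Fin (k - s)))
    (hA1 : ∀ i : Fin k, (i : ℕ) < s → A i = Finset.univ.image Sum.inl)
    (hA2 : ∀ i : Fin k, s ≤ (i : ℕ) →
      ∀ c, c ∈ A i ↔ ∃ j : Fin (k - s), c = Sum.inr j ∧ (i : ℕ) = s + (j : ℕ)) :
    (∀ W : Finset (Fin k ⊕ Fin (k - s)), W.card = k → providesJR A k W →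
      (∀ j : Fin (k - s), Sum.inr j ∈ W) ∧ swF A W ≤ 2 * k - s) ∧
    swF A (Finset.univ.image (Sum.inl : Fin k → Fin k ⊕ Fin (k - s))) = k * s := by
  have hss : s * s = k := by rw [hk, sq]
  have hsk : s ≤ k := hk ▸ Nat.le_self_pow two_ne_zero s
  refine ⟨fun W hWk hJR => ?_, ?_⟩
  · have hb (j : Fin (k - s)) : Sum.inr j ∈ W :=
      hJR.mem_of_eq_singleton (by simp) (approvals_add_eq_singleton hA2 j)
    have hinl := card_image_inl_inter_add_card_le hb
    refine ⟨hb, ?_⟩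
    calc swF A W ≤ ∑ i : Fin k, if (i : ℕ) < s then s else 1 := sum_le_sum fun i _ => ?_
      _ = 2 * k - s := by rw [Fin.sum_ite_val_lt hsk, smul_eq_mul, smul_eq_mul, mul_one]; omega
    split_ifs with hi
    · rw [Fintype.card_fin, hWk] at hinl
      rw [hA1 i hi]
      omega
    · obtain ⟨j, hj⟩ := exists_approvals_eq_singleton hA2 (not_lt.mp hi)
      rw [hj]
      exact (card_le_card inter_subset_left).trans_eq (card_singleton _)
  · calc swF A _ = ∑ i : Fin k, if (i : ℕ) < s then k else 0 := sum_congr rfl fun i _ => ?_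
      _ = k * s := by rw [Fin.sum_ite_val_lt hsk]; simp [mul_comm]
    split_ifs with hi
    · simp [hA1 i hi, card_image_of_injective _ Sum.inl_injective]
    · obtain ⟨j, hj⟩ := exists_approvals_eq_singleton hA2 (not_lt.mp hi)
      simp [hj]

/-- Lower-bound instance for the social welfare price of JR: `k = s²` voters,
candidates `a_1,…,a_k` (`Sum.inl`) and `b_1,…,b_{k-s}` (`Sum.inr`); voters with
index `< s` approve all `a`-candidates, voter `s + j` approves exactly `b_j`.
Any size-`k` JR committee contains every `b_j` and has social welfare at most
`2k - s = 2k - √k`, whereas `{a_1,…,a_k}` has social welfare `k·s = k·√k`. -/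
theorem stmt0 (s k : ℕ) (hs : 1 < s) (hk : k = s ^ 2)
    (A : Fin k → Finset (Fin k ⊕ Fin (k - s)))
    (hA1 : ∀ i : Fin k, (i : ℕ) < s → A i = Finset.univ.image Sum.inl)
    (hA2 : ∀ i : Fin k, s ≤ (i : ℕ) →
      ∀ c, c ∈ A i ↔ ∃ j : Fin (k - s), c = Sum.inr j ∧ (i : ℕ) = s + (j : ℕ)) :
    (∀ W : Finset (Fin k ⊕ Fin (k - s)), W.card = k → providesJR A k W →
      (∀ j : Fin (k - s), Sum.inr j ∈ W) ∧ swF A W ≤ 2 * k - s) ∧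
    swF A (Finset.univ.image (Sum.inl : Fin k → Fin k ⊕ Fin (k - s))) = k * s :=
  stmt0_general s k hk A hA1 hA2
end

section
/- Let β ∈ (0,2) and let k be an integer with k ≥ 25/(1 − β²/4)². Then for all real x ∈ [0,2] and α ∈ [0,1]: −1 − α·x² + x + β + x/√k ≤ √k·(α·x² − α·β·x + 1). -/
/-- Key inequality (eq. sw:jr) with the explicit bound on k from the appendix. -/
theorem stmt3 (β : ℝ) (hβ0 : 0 < β) (hβ2 : β < 2) (k : ℕ)
    (hk : 25 / (1 - β ^ 2 / 4) ^ 2 ≤ (k : ℝ)) (x α : ℝ)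
    (hx0 : 0 ≤ x) (hx2 : x ≤ 2) (hα0 : 0 ≤ α) (hα1 : α ≤ 1) :
    -1 - α * x ^ 2 + x + β + x / Real.sqrt k ≤
      Real.sqrt k * (α * x ^ 2 - α * β * x + 1) := by
  obtain ⟨c, hcdef⟩ : ∃ c : ℝ, c = 1 - β ^ 2 / 4 := ⟨_, rfl⟩
  rw [← hcdef] at hk
  have hc : 0 < c := by rw [hcdef]; nlinarith
  have hc1 : c ≤ 1 := by rw [hcdef]; nlinarith
  set s : ℝ := Real.sqrt k with hsdef
  have hs : 5 / c ≤ s := by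
    have h2 : (5 / c) ^ 2 ≤ (k : ℝ) := by
      calc (5 / c) ^ 2 = 25 / c ^ 2 := by rw [div_pow]; norm_num
      _ ≤ (k : ℝ) := hk
    rw [hsdef]
    exact (Real.le_sqrt (by positivity) k.cast_nonneg).mpr h2
  have hs5 : (5 : ℝ) ≤ s := le_trans (by
    rw [le_div_iff₀ hc]; nlinarith) hs
  have hquad : c ≤ α * x ^ 2 - α * β * x + 1 := by
    rw [hcdef]
    nlinarith [mul_nonneg hα0 (sq_nonneg (x - β / 2)), sq_nonneg (x - β / 2)]
  have hrhs : 5 ≤ s * (α * x ^ 2 - α * β * x + 1) := by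
    calc (5 : ℝ) = (5 / c) * c := by field_simp
    _ ≤ s * (α * x ^ 2 - α * β * x + 1) :=
        mul_le_mul hs hquad (le_of_lt hc) (by linarith)
  have hxs : x / s ≤ 2 / 5 := div_le_div₀ (by norm_num) hx2 (by norm_num) hs5
  have hax : 0 ≤ α * x ^ 2 := by positivity
  linarith
end

section
/- Let n, k be positive integers with k ≥ 25/(1 − β²/4)² for some β ∈ (0,2), and suppose x ∈ [0,2] and α ∈ [0,1] are reals with x√k an integer and k ≥ 2x√k + 1. Then (√k + αxk)/(√k − x + αx²√k) ≤ (1+√k)/β. -/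
/-- The core ratio bound in the proof of the upper bound on the social welfare
price of JR. -/
theorem stmt4 (n k : ℕ) (hn : 0 < n) (hk0 : 0 < k) (β x α : ℝ)
    (hβ0 : 0 < β) (hβ2 : β < 2)
    (hk : 25 / (1 - β ^ 2 / 4) ^ 2 ≤ (k : ℝ))
    (hx0 : 0 ≤ x) (hx2 : x ≤ 2) (hα0 : 0 ≤ α) (hα1 : α ≤ 1)
    (hr : ∃ r : ℕ, (r : ℝ) = x * Real.sqrt k)
    (hk2 : 2 * x * Real.sqrt k + 1 ≤ (k : ℝ)) :
    (Real.sqrt k + α * x * k) / (Real.sqrt k - x + α * x ^ 2 * Real.sqrt k) ≤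
      (1 + Real.sqrt k) / β := by
  set s := Real.sqrt k with hs
  have hs0 : 0 ≤ s := Real.sqrt_nonneg _
  have hss : s ^ 2 = (k : ℝ) := Real.sq_sqrt (Nat.cast_nonneg k)
  have ht : 0 < 1 - β ^ 2 / 4 := by nlinarith
  have hk' : 25 ≤ (1 - β ^ 2 / 4) ^ 2 * (k : ℝ) := by
    rw [div_le_iff₀ (by positivity)] at hk; linarith
  have hts : 5 ≤ (1 - β ^ 2 / 4) * s := by
    nlinarith [mul_nonneg ht.le hs0, hk']
  have hs5 : 5 ≤ s := by nlinarith [mul_nonneg ht.le hs0]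
  have hd : 0 < s - x + α * x ^ 2 * s := by
    nlinarith [mul_nonneg (mul_nonneg hα0 (sq_nonneg x)) hs0]
  rw [div_le_div_iff₀ hd hβ0, ← hss]
  nlinarith [mul_nonneg (mul_nonneg hα0 (sq_nonneg (x - β / 2))) (sq_nonneg s),
    mul_nonneg (mul_nonneg (by linarith : (0:ℝ) ≤ 1 - α) (by positivity : (0:ℝ) ≤ β ^ 2 / 4)) (sq_nonneg s),
    mul_nonneg (mul_nonneg hα0 (sq_nonneg x)) hs0,
    mul_le_mul_of_nonneg_right hts hs0]
end

section
/- In the reduction instance from Lemma (eds reduction): any size-k committee W' = E' ∪ Z' (E' ⊆ E edges, Z' ⊆ Z dummy candidates) that provides JR must have E' an edge dominating set of G; hence sw(W') = y·k − (y−2)·|E'| ≤ y·k − (y−2)·eds(G). -/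
/-- `S` is an edge dominating set of `G`. -/
def IsEDS {V : Type*} [Fintype V] [DecidableEq V] (G : SimpleGraph V)
    [DecidableRel G.Adj] (S : Finset (Sym2 V)) : Prop :=
  S ⊆ G.edgeFinset ∧ ∀ e ∈ G.edgeFinset, ∃ f ∈ S, ∃ v, v ∈ e ∧ v ∈ f

lemma card_mem_sym2 {V : Type*} [Fintype V] [DecidableEq V]
    (G : SimpleGraph V) [DecidableRel G.Adj] (e : Sym2 V) (he : e ∈ G.edgeFinset) :
    (Finset.univ.filter (fun v => v ∈ e)).card = 2 := by
  rw [SimpleGraph.mem_edgeFinset] at he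
  induction e using Sym2.ind with
  | _ a b =>
    have hab : a ≠ b := (G.mem_edgeSet.mp he).ne
    have : (Finset.univ.filter (fun v => v ∈ s(a, b))) = {a, b} := by
      ext v; simp [Sym2.mem_iff]
    rw [this, Finset.card_pair hab]

/-- In the eds-reduction instance, any size-`k` JR committee `W' = E' ∪ Z'`
(edge candidates `We` plus dummy candidates `Zs`) has `E'` an edge dominating
set of `G`, whence `sw(W') = y·k − (y−2)·|E'| ≤ y·k − (y−2)·eds(G)`. -/
theorem stmt7 {V : Type*} [Fintype V] [DecidableEq V]
    (G : SimpleGraph V) [DecidableRel G.Adj] (y k d : ℕ) (hy : 2 ≤ y)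
    (hk : 2 * k = Fintype.card V + y)
    (A : V ⊕ Fin y → Finset ({e // e ∈ G.edgeFinset} ⊕ Fin (Fintype.card V)))
    (hA1 : ∀ (v : V) (e : {e // e ∈ G.edgeFinset}),
      Sum.inl e ∈ A (Sum.inl v) ↔ v ∈ (e : Sym2 V))
    (hA2 : ∀ (v : V) (z : Fin (Fintype.card V)), Sum.inr z ∉ A (Sum.inl v))
    (hA3 : ∀ (u : Fin y) (e : {e // e ∈ G.edgeFinset}), Sum.inl e ∉ A (Sum.inr u))
    (hA4 : ∀ (u : Fin y) (z : Fin (Fintype.card V)), Sum.inr z ∈ A (Sum.inr u))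
    (hd : IsLeast {m | ∃ S : Finset (Sym2 V), IsEDS G S ∧ S.card = m} d)
    (We : Finset {e // e ∈ G.edgeFinset}) (Zs : Finset (Fin (Fintype.card V)))
    (W' : Finset ({e // e ∈ G.edgeFinset} ⊕ Fin (Fintype.card V)))
    (hW' : W' = We.image Sum.inl ∪ Zs.image Sum.inr)
    (hWcard : W'.card = k) (hJR : providesJR A k W') :
    IsEDS G (We.image (fun e => (e : Sym2 V) : {e // e ∈ G.edgeFinset} → Sym2 V)) ∧
    swF A W' = y * k - (y - 2) * We.card ∧
    swF A W' ≤ y * k - (y - 2) * d := by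
  classical
  -- EDS part
  have hEDS : IsEDS G (We.image (fun e : {e // e ∈ G.edgeFinset} => (e : Sym2 V))) := by
    constructor
    · intro x hx
      rcases Finset.mem_image.mp hx with ⟨e, _, rfl⟩
      exact e.2
    · intro e he
      induction e using Sym2.ind with
      | _ a b =>
        have hab : a ≠ b := (G.mem_edgeSet.mp
          (SimpleGraph.mem_edgeFinset.mp he)).ne
        set N' : Finset (V ⊕ Fin y) := {Sum.inl a, Sum.inl b} with hN'
        have hNcard : N'.card = 2 := by
          rw [hN', Finset.card_pair (by simp [hab])]
        have hbig : Fintype.card (V ⊕ Fin y) ≤ k * N'.card := by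
          rw [hNcard]
          simp [Fintype.card_sum]
          omega
        have hcommon : ∃ c, ∀ i ∈ N', c ∈ A i := by
          refine ⟨Sum.inl ⟨s(a, b), he⟩, ?_⟩
          intro i hi
          rcases Finset.mem_insert.mp hi with h | h
          · subst h; rw [hA1]; simp
          · rw [Finset.mem_singleton] at h; subst h; rw [hA1]; simp
        obtain ⟨i, hiN, c, hc⟩ := hJR N' hbig hcommon
        rw [Finset.mem_inter] at hc
        obtain ⟨hcA, hcW⟩ := hc
        -- i is inl a or inl b
        have hi : i = Sum.inl a ∨ i = Sum.inl b := by
          rcases Finset.mem_insert.mp hiN with h | h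
          · exact Or.inl h
          · exact Or.inr (Finset.mem_singleton.mp h)
        -- c is an edge candidate in We
        obtain ⟨v, hv⟩ : ∃ v : V, i = Sum.inl v := by
          rcases hi with h | h <;> exact ⟨_, h⟩
        subst hv
        obtain ⟨f, hfWe, rfl⟩ : ∃ f, f ∈ We ∧ c = Sum.inl f := by
          rw [hW', Finset.mem_union] at hcW
          rcases hcW with h | h
          · rcases Finset.mem_image.mp h with ⟨f, hf, rfl⟩; exact ⟨f, hf, rfl⟩
          · rcases Finset.mem_image.mp h with ⟨z, _, rfl⟩
            exact absurd hcA (hA2 v z)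
        have hvf : v ∈ (f : Sym2 V) := (hA1 v f).mp hcA
        refine ⟨(f : Sym2 V), Finset.mem_image_of_mem _ hfWe, v, ?_, hvf⟩
        rcases hi with h | h <;> simp_all
  -- social welfare computation
  have hinter1 : ∀ v : V, (A (Sum.inl v) ∩ W') =
      (We.filter (fun e : {e // e ∈ G.edgeFinset} => v ∈ (e : Sym2 V))).image Sum.inl := by
    intro v
    ext c
    cases c with
    | inl e => simp [hW', hA1, and_comm]
    | inr z => simp [hW', hA2]
  have hinter2 : ∀ u : Fin y, (A (Sum.inr u) ∩ W') = Zs.image Sum.inr := by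
    intro u
    ext c
    cases c with
    | inl e => simp [hW', hA3]
    | inr z => simp [hW', hA4]
  have hsw : swF A W' = 2 * We.card + y * Zs.card := by
    rw [swF, Fintype.sum_sum_type]
    have h1 : ∑ v : V, (A (Sum.inl v) ∩ W').card
        = ∑ v : V, (We.filter (fun e : {e // e ∈ G.edgeFinset} => v ∈ (e : Sym2 V))).card := by
      refine Finset.sum_congr rfl fun v _ => ?_
      rw [hinter1 v, Finset.card_image_of_injective _ Sum.inl_injective]
    have h2 : ∑ v : V, (We.filter (fun e : {e // e ∈ G.edgeFinset} => v ∈ (e : Sym2 V))).card = 2 * We.card := by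
      simp only [Finset.card_filter]
      rw [Finset.sum_comm]
      have : ∀ e ∈ We, (∑ v : V, if v ∈ (e : Sym2 V) then 1 else 0) = 2 := by
        intro e _
        rw [← Finset.card_filter]
        exact card_mem_sym2 G e e.2
      rw [Finset.sum_congr rfl this, Finset.sum_const, smul_eq_mul, mul_comm]
    have h3 : ∑ u : Fin y, (A (Sum.inr u) ∩ W').card = y * Zs.card := by
      have : ∀ u : Fin y, (A (Sum.inr u) ∩ W').card = Zs.card := by
        intro u
        rw [hinter2 u, Finset.card_image_of_injective _ Sum.inr_injective]
      rw [Finset.sum_congr rfl (fun u _ => this u), Finset.sum_const,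
        Finset.card_univ, Fintype.card_fin, smul_eq_mul]
    rw [h1, h2, h3]
  have hcardWZ : We.card + Zs.card = k := by
    rw [← hWcard, hW', Finset.card_union_of_disjoint, Finset.card_image_of_injective _
      Sum.inl_injective, Finset.card_image_of_injective _ Sum.inr_injective]
    simp [Finset.disjoint_left]
  have hdle : d ≤ We.card := by
    have := hd.2 ⟨We.image (fun e : {e // e ∈ G.edgeFinset} => (e : Sym2 V)), hEDS, rfl⟩
    calc d ≤ (We.image (fun e : {e // e ∈ G.edgeFinset} => (e : Sym2 V))).card := this
      _ ≤ We.card := Finset.card_image_le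
  -- arithmetic
  have hyk : y * k = y * We.card + y * Zs.card := by
    rw [← hcardWZ, Nat.mul_add]
  have hsub1 : (y - 2) * We.card = y * We.card - 2 * We.card := by
    rw [Nat.sub_mul]
  have hsub2 : (y - 2) * d = y * d - 2 * d := by
    rw [Nat.sub_mul]
  have hm1 : 2 * We.card ≤ y * We.card := Nat.mul_le_mul_right _ hy
  have hm2 : 2 * d ≤ y * d := Nat.mul_le_mul_right _ hy
  have hm3 : y * d ≤ y * We.card := Nat.mul_le_mul_left _ hdle
  have hm4 : 2 * d ≤ 2 * We.card := Nat.mul_le_mul_left _ hdle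
  have hm5 : (y - 2) * d ≤ (y - 2) * We.card := Nat.mul_le_mul_left _ hdle
  refine ⟨hEDS, ?_, ?_⟩ <;> omega
end

section
/- Let G' = (V', E') be a graph with independence number α(G'). Form G = (V,E) by adding n'' = |V'| − ⌈|V'|^{1−β}⌉ new vertices each adjacent to all other vertices of G (for some β with |V'|^{1−β} ≤ |V'|). If α(G') ≥ |V'|^{1−β}, then eds(G) ≤ |V'| − ⌈|V'|^{1−β}⌉. -/
/-!
An independent set `S` of `G'` of size at least `|V'|^{1−β}` contains a subset `T` of size exactly
`k = ⌈|V'|^{1−β}⌉`, whose complement has `|V'| − k = n''` vertices. Matching these vertices with the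
`n''` universal vertices gives `n''` edges of `G` covering every vertex outside `T`, and `T` is still
independent in `G`, so every edge of `G` has an endpoint on the matching.
-/

open Finset

namespace SimpleGraph

variable {α : Type*} {G : SimpleGraph α}

theorem IsIndepSet.exists_mem_dominating_of_covers_compl {s : Set α} (hs : G.IsIndepSet s)
    {D : Set (Sym2 α)} (hD : ∀ v ∉ s, ∃ f ∈ D, v ∈ f) {e : Sym2 α} (he : e ∈ G.edgeSet) :
    ∃ f ∈ D, ∃ v, v ∈ e ∧ v ∈ f := by
  obtain ⟨v, hvs, hve⟩ := IsIndepSet.nonempty_mem_compl_mem_edge G hs he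
  obtain ⟨f, hfD, hvf⟩ := hD v hvs
  exact ⟨f, hfD, v, hve, hvf⟩

theorem IsIndepSet.image_inl {β : Type*} {G' : SimpleGraph α} {H : SimpleGraph (α ⊕ β)}
    (hH : ∀ a b, H.Adj (Sum.inl a) (Sum.inl b) → G'.Adj a b) {s : Set α} (hs : G'.IsIndepSet s) :
    H.IsIndepSet (Sum.inl '' s) := by
  rintro _ ⟨a, ha, rfl⟩ _ ⟨b, hb, rfl⟩ hab hadj
  exact hs ha hb (fun h => hab (congrArg Sum.inl h)) (hH a b hadj)

end SimpleGraph

section SumMatching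

variable {V W : Type*} [DecidableEq V] [DecidableEq W] [Fintype W] {A : Finset V}

def sumMatching (e : W ≃ A) : Finset (Sym2 (V ⊕ W)) :=
  univ.image fun w => s(Sum.inl (e w : V), Sum.inr w)

theorem card_sumMatching_le (e : W ≃ A) : #(sumMatching e) ≤ Fintype.card W :=
  card_image_le

theorem sumMatching_subset_edgeSet (e : W ≃ A) {G : SimpleGraph (V ⊕ W)}
    (hG : ∀ a ∈ A, ∀ w, G.Adj (Sum.inl a) (Sum.inr w)) :
    (sumMatching e : Set (Sym2 (V ⊕ W))) ⊆ G.edgeSet := by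
  intro f hf
  obtain ⟨w, -, rfl⟩ := mem_image.1 hf
  exact hG _ (e w).2 w

theorem exists_mem_sumMatching_of_notMem_image_inl (e : W ≃ A) {v : V ⊕ W}
    (hv : v ∉ Sum.inl '' (A : Set V)ᶜ) : ∃ f ∈ sumMatching e, v ∈ f := by
  rcases v with a | w
  · have ha : a ∈ A := by simpa using hv
    refine ⟨s(Sum.inl a, Sum.inr (e.symm ⟨a, ha⟩)),
      mem_image.2 ⟨e.symm ⟨a, ha⟩, mem_univ _, by simp⟩, by simp⟩
  · exact ⟨_, mem_image_of_mem _ (mem_univ w), Sym2.mem_mk_right _ _⟩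

end SumMatching

theorem stmt8_general {V' : Type*} [Fintype V'] [DecidableEq V'] (G' : SimpleGraph V')
    (β : ℝ)
    (n'' : ℕ)
    (hn'' : n'' = Fintype.card V' - ⌈((Fintype.card V' : ℝ)) ^ ((1 : ℝ) - β)⌉₊)
    (G : SimpleGraph (V' ⊕ Fin n'')) [DecidableRel G.Adj]
    (hG1 : ∀ a b : V', G.Adj (Sum.inl a) (Sum.inl b) ↔ G'.Adj a b)
    (hG2 : ∀ x y : V' ⊕ Fin n'', x ≠ y → (x.isRight ∨ y.isRight) → G.Adj x y)
    (hα : ∃ S : Finset V', (∀ a ∈ S, ∀ b ∈ S, ¬ G'.Adj a b) ∧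
      ((Fintype.card V' : ℝ)) ^ ((1 : ℝ) - β) ≤ (S.card : ℝ)) :
    ∃ D : Finset (Sym2 (V' ⊕ Fin n'')),
      (D ⊆ G.edgeFinset ∧ ∀ e ∈ G.edgeFinset, ∃ f ∈ D, ∃ v, v ∈ e ∧ v ∈ f) ∧
      D.card ≤ Fintype.card V' - ⌈((Fintype.card V' : ℝ)) ^ ((1 : ℝ) - β)⌉₊ := by
  obtain ⟨S, hSind, hScard⟩ := hα
  obtain ⟨T, hTS, hTcard⟩ := exists_subset_card_eq (Nat.ceil_le.2 hScard)
  have hTindep : G.IsIndepSet (Sum.inl '' (T : Set V')) :=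
    SimpleGraph.IsIndepSet.image_inl (fun a b => (hG1 a b).1)
      fun a ha b hb _ => hSind a (hTS ha) b (hTS hb)
  have hcard : Fintype.card (Tᶜ : Finset V') = n'' := by
    rw [Fintype.card_coe, card_compl, hTcard, hn'']
  let e : Fin n'' ≃ (Tᶜ : Finset V') := (Fintype.equivFinOfCardEq hcard).symm
  refine ⟨sumMatching e, ⟨?_, fun f hf => ?_⟩, ?_⟩
  · rw [← Finset.coe_subset, SimpleGraph.coe_edgeFinset]
    exact sumMatching_subset_edgeSet e fun a _ w => hG2 _ _ Sum.inl_ne_inr (Or.inr rfl)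
  · refine hTindep.exists_mem_dominating_of_covers_compl (fun v hv => ?_)
      (G.mem_edgeFinset.1 hf)
    exact exists_mem_sumMatching_of_notMem_image_inl e (by simpa using hv)
  · calc #(sumMatching e) ≤ n'' := by simpa using card_sumMatching_le e
      _ = _ := hn''

/-- Adding `n'' = |V'| − ⌈|V'|^{1−β}⌉` universal vertices to `G'`: if `G'` has an
independent set of size at least `|V'|^{1−β}`, then the resulting graph `G` has
an edge dominating set of size at most `|V'| − ⌈|V'|^{1−β}⌉`. -/
theorem stmt8 {V' : Type*} [Fintype V'] [DecidableEq V'] (G' : SimpleGraph V')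
    (β : ℝ)
    (hβ : ((Fintype.card V' : ℝ)) ^ ((1 : ℝ) - β) ≤ (Fintype.card V' : ℝ))
    (n'' : ℕ)
    (hn'' : n'' = Fintype.card V' - ⌈((Fintype.card V' : ℝ)) ^ ((1 : ℝ) - β)⌉₊)
    (G : SimpleGraph (V' ⊕ Fin n'')) [DecidableRel G.Adj]
    (hG1 : ∀ a b : V', G.Adj (Sum.inl a) (Sum.inl b) ↔ G'.Adj a b)
    (hG2 : ∀ x y : V' ⊕ Fin n'', x ≠ y → (x.isRight ∨ y.isRight) → G.Adj x y)
    (hα : ∃ S : Finset V', (∀ a ∈ S, ∀ b ∈ S, ¬ G'.Adj a b) ∧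
      ((Fintype.card V' : ℝ)) ^ ((1 : ℝ) - β) ≤ (S.card : ℝ)) :
    ∃ D : Finset (Sym2 (V' ⊕ Fin n'')),
      (D ⊆ G.edgeFinset ∧ ∀ e ∈ G.edgeFinset, ∃ f ∈ D, ∃ v, v ∈ e ∧ v ∈ f) ∧
      D.card ≤ Fintype.card V' - ⌈((Fintype.card V' : ℝ)) ^ ((1 : ℝ) - β)⌉₊ :=
  stmt8_general G' β n'' hn'' G hG1 hG2 hα
end

section
/- Let (u, S) be an exact-3-cover instance: S = {S_1,...,S_M} with each S_i ⊆ [u] of size 3. Construct an approval instance with voters [u] ∪ T where |T| = 4, candidates S ∪ Z where |Z| = u+4, each element-voter i ∈ [u] approving exactly the sets containing i, and each voter in T approving all of Z; set k = n = u + 4. Then the maximum social welfare over size-k JR committees equals 4(u+4) − opt_setcov(u, S), where opt_setcov is the minimum number of sets from S covering [u]. -/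
section Aux

variable {u M : ℕ} {S : Fin M → Finset (Fin u)}
  {A : Fin u ⊕ Fin 4 → Finset (Fin M ⊕ Fin (u + 4))}

lemma aux_inter_inl (hA1 : ∀ (i : Fin u) (j : Fin M), Sum.inl j ∈ A (Sum.inl i) ↔ i ∈ S j)
    (hA2 : ∀ (i : Fin u) (z : Fin (u + 4)), Sum.inr z ∉ A (Sum.inl i))
    (i : Fin u) (W : Finset (Fin M ⊕ Fin (u + 4))) :
    A (Sum.inl i) ∩ W = (W.toLeft.filter (fun j => i ∈ S j)).image Sum.inl := by
  ext c
  rcases c with j | z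
  · simp [hA1, Finset.mem_toLeft, and_comm]
  · simp [hA2]

lemma aux_inter_inr (hA3 : ∀ (t : Fin 4) (j : Fin M), Sum.inl j ∉ A (Sum.inr t))
    (hA4 : ∀ (t : Fin 4) (z : Fin (u + 4)), Sum.inr z ∈ A (Sum.inr t))
    (t : Fin 4) (W : Finset (Fin M ⊕ Fin (u + 4))) :
    A (Sum.inr t) ∩ W = W.toRight.image Sum.inr := by
  ext c
  rcases c with j | z
  · simp [hA3]
  · simp [hA4, Finset.mem_toRight]

lemma aux_sw (hS : ∀ j, (S j).card = 3)
    (hA1 : ∀ (i : Fin u) (j : Fin M), Sum.inl j ∈ A (Sum.inl i) ↔ i ∈ S j)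
    (hA2 : ∀ (i : Fin u) (z : Fin (u + 4)), Sum.inr z ∉ A (Sum.inl i))
    (hA3 : ∀ (t : Fin 4) (j : Fin M), Sum.inl j ∉ A (Sum.inr t))
    (hA4 : ∀ (t : Fin 4) (z : Fin (u + 4)), Sum.inr z ∈ A (Sum.inr t))
    (W : Finset (Fin M ⊕ Fin (u + 4))) :
    swF A W = 3 * W.toLeft.card + 4 * W.toRight.card := by
  unfold swF
  rw [Fintype.sum_sum_type]
  have h1 : ∑ i : Fin u, (A (Sum.inl i) ∩ W).card = 3 * W.toLeft.card := by
    have : ∀ i : Fin u, (A (Sum.inl i) ∩ W).card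
        = (W.toLeft.filter (fun j => i ∈ S j)).card := by
      intro i
      rw [aux_inter_inl hA1 hA2, Finset.card_image_of_injective _ Sum.inl_injective]
    simp_rw [this, Finset.card_filter]
    rw [Finset.sum_comm]
    simp [Finset.sum_ite_mem, hS, mul_comm]
  have h2 : ∀ t : Fin 4, (A (Sum.inr t) ∩ W).card = W.toRight.card := by
    intro t
    rw [aux_inter_inr hA3 hA4, Finset.card_image_of_injective _ Sum.inr_injective]
  rw [h1]
  simp [h2]

end Aux

section Aux2

variable {u M : ℕ} {S : Fin M → Finset (Fin u)}
  {A : Fin u ⊕ Fin 4 → Finset (Fin M ⊕ Fin (u + 4))}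

lemma aux_jr_of_cover
    (hA1 : ∀ (i : Fin u) (j : Fin M), Sum.inl j ∈ A (Sum.inl i) ↔ i ∈ S j)
    (hA4 : ∀ (t : Fin 4) (z : Fin (u + 4)), Sum.inr z ∈ A (Sum.inr t))
    (W : Finset (Fin M ⊕ Fin (u + 4)))
    (hcov : ∀ i : Fin u, ∃ j ∈ W.toLeft, i ∈ S j)
    (hz : W.toRight.Nonempty) : providesJR A (u + 4) W := by
  intro N' hcard _
  have hne : N'.Nonempty := by
    rw [Finset.nonempty_iff_ne_empty]
    rintro rfl
    simp at hcard
  obtain ⟨v, hv⟩ := hne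
  refine ⟨v, hv, ?_⟩
  rcases v with i | t
  · obtain ⟨j, hjW, hij⟩ := hcov i
    exact ⟨Sum.inl j, Finset.mem_inter.2 ⟨(hA1 i j).2 hij, Finset.mem_toLeft.1 hjW⟩⟩
  · obtain ⟨z, hzW⟩ := hz
    exact ⟨Sum.inr z, Finset.mem_inter.2 ⟨hA4 t z, Finset.mem_toRight.1 hzW⟩⟩

lemma aux_cover_of_jr
    (hA1 : ∀ (i : Fin u) (j : Fin M), Sum.inl j ∈ A (Sum.inl i) ↔ i ∈ S j)
    (hA2 : ∀ (i : Fin u) (z : Fin (u + 4)), Sum.inr z ∉ A (Sum.inl i))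
    (hA3 : ∀ (t : Fin 4) (j : Fin M), Sum.inl j ∉ A (Sum.inr t))
    (hA4 : ∀ (t : Fin 4) (z : Fin (u + 4)), Sum.inr z ∈ A (Sum.inr t))
    (hScov : ∀ i : Fin u, ∃ j : Fin M, i ∈ S j)
    (W : Finset (Fin M ⊕ Fin (u + 4)))
    (hjr : providesJR A (u + 4) W) :
    (∀ i : Fin u, ∃ j ∈ W.toLeft, i ∈ S j) ∧ W.toRight.Nonempty := by
  constructor
  · intro i
    obtain ⟨j0, hj0⟩ := hScov i
    obtain ⟨v, hv, c, hc⟩ := hjr {Sum.inl i} (by simp [Fintype.card_sum]) ⟨Sum.inl j0, by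
      simp [hA1, hj0]⟩
    simp only [Finset.mem_singleton] at hv
    subst hv
    rcases c with j | z
    · rw [Finset.mem_inter] at hc
      exact ⟨j, Finset.mem_toLeft.2 hc.2, (hA1 i j).1 hc.1⟩
    · exact absurd (Finset.mem_inter.1 hc).1 (hA2 i z)
  · obtain ⟨v, hv, c, hc⟩ := hjr {Sum.inr 0} (by simp [Fintype.card_sum])
      ⟨Sum.inr ⟨0, by omega⟩, by simp [hA4]⟩
    simp only [Finset.mem_singleton] at hv
    subst hv
    rcases c with j | z
    · exact absurd (Finset.mem_inter.1 hc).1 (hA3 0 j)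
    · exact ⟨z, Finset.mem_toRight.2 (Finset.mem_inter.1 hc).2⟩

end Aux2

/-- Reduction from exact-3-cover: voters `[u] ∪ T` with `|T| = 4`, candidates
`S ∪ Z` with `|Z| = u + 4`, element-voters approve exactly the sets containing
them, voters in `T` approve all of `Z`, and `k = n = u + 4`. The maximum social
welfare over size-`k` JR committees equals `4(u+4) − opt_setcov(u, S)`. -/
theorem stmt10 (u M : ℕ) (S : Fin M → Finset (Fin u)) (hS : ∀ j, (S j).card = 3)
    (A : Fin u ⊕ Fin 4 → Finset (Fin M ⊕ Fin (u + 4)))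
    (hA1 : ∀ (i : Fin u) (j : Fin M), Sum.inl j ∈ A (Sum.inl i) ↔ i ∈ S j)
    (hA2 : ∀ (i : Fin u) (z : Fin (u + 4)), Sum.inr z ∉ A (Sum.inl i))
    (hA3 : ∀ (t : Fin 4) (j : Fin M), Sum.inl j ∉ A (Sum.inr t))
    (hA4 : ∀ (t : Fin 4) (z : Fin (u + 4)), Sum.inr z ∈ A (Sum.inr t))
    (opt : ℕ)
    (hopt : IsLeast {r | ∃ T : Finset (Fin M),
      (∀ i : Fin u, ∃ j ∈ T, i ∈ S j) ∧ T.card = r} opt) :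
    IsGreatest {w | ∃ W : Finset (Fin M ⊕ Fin (u + 4)),
      W.card = u + 4 ∧ providesJR A (u + 4) W ∧ swF A W = w}
      (4 * (u + 4) - opt) := by
  classical
  obtain ⟨⟨T0, hT0cov, hT0card⟩, hmin⟩ := hopt
  have hScov : ∀ i : Fin u, ∃ j : Fin M, i ∈ S j := by
    intro i
    obtain ⟨j, _, h⟩ := hT0cov i
    exact ⟨j, h⟩
  choose f hf using hScov
  have hoptu : opt ≤ u := by
    have h1 : opt ≤ ((Finset.univ : Finset (Fin u)).image f).card := by
      refine hmin ⟨_, ?_, rfl⟩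
      intro i
      exact ⟨f i, Finset.mem_image_of_mem f (Finset.mem_univ i), hf i⟩
    calc opt ≤ _ := h1
      _ ≤ (Finset.univ : Finset (Fin u)).card := Finset.card_image_le
      _ = u := by simp
  constructor
  · -- membership
    obtain ⟨Zs, -, hZcard⟩ := Finset.exists_subset_card_eq
      (show u + 4 - opt ≤ (Finset.univ : Finset (Fin (u + 4))).card by simp)
    refine ⟨T0.image Sum.inl ∪ Zs.image Sum.inr, ?_, ?_, ?_⟩
    all_goals
      have hL : (T0.image Sum.inl ∪ Zs.image Sum.inr).toLeft = T0 := by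
        ext j; simp [Finset.mem_toLeft]
      have hR : (T0.image Sum.inl ∪ Zs.image Sum.inr).toRight = Zs := by
        ext z; simp [Finset.mem_toRight]
      have hc := Finset.card_toLeft_add_card_toRight (u := T0.image Sum.inl ∪ Zs.image Sum.inr)
      rw [hL, hR, hT0card, hZcard] at hc
    · omega
    · refine aux_jr_of_cover hA1 hA4 _ ?_ ?_
      · rw [hL]; exact hT0cov
      · rw [hR, ← Finset.card_pos, hZcard]; omega
    · rw [aux_sw hS hA1 hA2 hA3 hA4, hL, hR, hT0card, hZcard]
      omega
  · -- upper bound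
    rintro w ⟨W, hWcard, hWjr, rfl⟩
    obtain ⟨hcov, hz⟩ := aux_cover_of_jr hA1 hA2 hA3 hA4 (fun i => ⟨f i, hf i⟩) W hWjr
    have hs : opt ≤ W.toLeft.card := hmin ⟨W.toLeft, hcov, rfl⟩
    have hsum := Finset.card_toLeft_add_card_toRight (u := W)
    rw [hWcard] at hsum
    rw [aux_sw hS hA1 hA2 hA3 hA4]
    omega
end

section
/- There is an instance with n voters (n = 16t² for positive integer t) and committee size k = n/2 on which: (a) some JR committee has social welfare Θ(n√n) (at least (n/4)·√n), while (b) GreedyCC with adversarial tie-breaking outputs a committee of social welfare O(n). Concretely: voters are vertices of a graph with clique L (|L| = n/2) and independent set R (|R| = n/2) joined by a perfect matching; candidates are the edges plus a set S of n/4 candidates each approved by the same fixed √n voters of R. The committee consisting of S together with a perfect matching of L provides JR and has social welfare ≥ (n/4)√n + n/2; GreedyCC can end with each selected candidate contributing at most √n approvals after covering, yielding total welfare at most 2(n/2) + √n·(√n) = O(n). -/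
/-- Number of voters newly covered by candidate `c` given the committee `W`. -/
def newcov {V C : Type*} [Fintype V] [DecidableEq C] (A : V → Finset C) (c : C)
    (W : Finset C) : ℕ :=
  (Finset.univ.filter (fun i : V => c ∈ A i ∧ ((A i) ∩ W) = ∅)).card

/-- `W` is a possible output of GreedyCC (with some tie-breaking): there is an
order `w` of its `k` members and a first-stage length `k'` such that each
first-stage candidate covers the maximum number (and at least `n/k = 2`) of new
voters, and after the first stage no candidate covers `≥ 2` new voters. -/
def IsGreedyCCRun {V C : Type*} [Fintype V] [DecidableEq C] (A : V → Finset C)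
    (k : ℕ) (W : Finset C) : Prop :=
  ∃ w : Fin k → C, Function.Injective w ∧ W = Finset.image w Finset.univ ∧
    ∃ k' : ℕ, k' ≤ k ∧
      (∀ j : Fin k, (j : ℕ) < k' →
        2 ≤ newcov A (w j) ((Finset.univ.filter (fun j' : Fin k => j' < j)).image w) ∧
        ∀ c : C, newcov A c ((Finset.univ.filter (fun j' : Fin k => j' < j)).image w) ≤
          newcov A (w j) ((Finset.univ.filter (fun j' : Fin k => j' < j)).image w)) ∧
      ∀ c : C, newcov A c
        ((Finset.univ.filter (fun j' : Fin k => (j' : ℕ) < k')).image w) < 2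

/-!
The committee `S ∪ M`, for `M` a perfect matching of `L`, covers all of `L` and the `√n` voters
approving `S`. Two voters of `R` can only share a member of `S`, so it provides JR, and each of the
`√n` voters approves all `n/4` members of `S`.

GreedyCC may instead start with one member of `S` (covering `√n` voters) and then take the edges
of `M`, each covering two new voters. Afterwards only the uncovered voters of `R` remain, each
approving only its own matching candidate, so no candidate covers two new voters and the committee
is filled with candidates nobody approves. Every voter then approves at most one committee member.
-/

open Finset

section General

variable {V C : Type*} [Fintype V] [DecidableEq C] (A : V → Finset C)

lemma newcov_le_card {c : C} {W : Finset C} {s : Finset V}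
    (h : ∀ i, c ∈ A i → A i ∩ W = ∅ → i ∈ s) : newcov A c W ≤ #s :=
  card_le_card fun i hi => by
    rw [mem_filter] at hi
    exact h i hi.2.1 hi.2.2

lemma two_le_newcov {c : C} {W : Finset C} {i i' : V} (hne : i ≠ i')
    (hi : c ∈ A i ∧ A i ∩ W = ∅) (hi' : c ∈ A i' ∧ A i' ∩ W = ∅) : 2 ≤ newcov A c W := by
  classical
  calc 2 = #{i, i'} := (card_pair hne).symm
    _ ≤ newcov A c W := card_le_card fun u hu => by
      rcases mem_insert.1 hu with rfl | hu
      · exact mem_filter.2 ⟨mem_univ u, hi⟩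
      · exact mem_filter.2 ⟨mem_univ u, mem_singleton.1 hu ▸ hi'⟩

lemma newcov_congr {c c' : C} (W : Finset C) (h : ∀ i, c ∈ A i ↔ c' ∈ A i) :
    newcov A c W = newcov A c' W := by
  simp only [newcov, h]

lemma swF_le_card {W : Finset C} (h : ∀ i, #(A i ∩ W) ≤ 1) : swF A W ≤ Fintype.card V :=
  calc swF A W ≤ ∑ _i : V, 1 := sum_le_sum fun i _ => h i
    _ = Fintype.card V := by simp

lemma providesJR_of_pair {k : ℕ} {W : Finset C} (hk : k < Fintype.card V)
    (h : ∀ c i j, i ≠ j → c ∈ A i → c ∈ A j → (A i ∩ W).Nonempty ∨ (A j ∩ W).Nonempty) :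
    providesJR A k W := by
  rintro N hN ⟨c, hc⟩
  have hN2 : 1 < #N := by
    by_contra! hN1
    nlinarith [Nat.mul_le_mul_left k hN1]
  obtain ⟨i, hi, j, hj, hij⟩ := one_lt_card.1 hN2
  rcases h c i j hij (hc i hi) (hc j hj) with hcov | hcov
  exacts [⟨i, hi, hcov⟩, ⟨j, hj, hcov⟩]

end General

namespace CliqueMatching

/-- Voter `inl v` lies in the clique `L`, voter `inr v` in the independent set `R`. -/
abbrev Voter (t : ℕ) := Fin (8 * t ^ 2) ⊕ Fin (8 * t ^ 2)

/-- Candidate `inl e` is the clique edge `e`, `inr (inl v)` the matching edge between `inl v` and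
`inr v`, and `inr (inr j)` the `j`-th member of `S`. -/
abbrev Candidate (t : ℕ) := Sym2 (Fin (8 * t ^ 2)) ⊕ Fin (8 * t ^ 2) ⊕ Fin (4 * t ^ 2)

structure IsInstance (t : ℕ) (A : Voter t → Finset (Candidate t)) : Prop where
  edge_mem_left : ∀ v e, Sum.inl e ∈ A (Sum.inl v) ↔ v ∈ e ∧ ¬ e.IsDiag
  match_mem_left : ∀ v j, Sum.inr (Sum.inl j) ∈ A (Sum.inl v) ↔ j = v
  shared_not_mem_left : ∀ v j, Sum.inr (Sum.inr j) ∉ A (Sum.inl v)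
  edge_not_mem_right : ∀ v e, Sum.inl e ∉ A (Sum.inr v)
  match_mem_right : ∀ v j, Sum.inr (Sum.inl j) ∈ A (Sum.inr v) ↔ j = v
  shared_mem_right : ∀ v j, Sum.inr (Sum.inr j) ∈ A (Sum.inr v) ↔ (v : ℕ) < 4 * t

variable {t : ℕ}

def pairEdge (i : Fin (4 * t ^ 2)) : Sym2 (Fin (8 * t ^ 2)) :=
  s(⟨2 * i, by omega⟩, ⟨2 * i + 1, by omega⟩)

lemma mem_pairEdge {v : Fin (8 * t ^ 2)} {i : Fin (4 * t ^ 2)} :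
    v ∈ pairEdge i ↔ (v : ℕ) / 2 = i := by
  simp only [pairEdge, Sym2.mem_iff, Fin.ext_iff]
  omega

lemma pairEdge_not_isDiag (i : Fin (4 * t ^ 2)) : ¬ (pairEdge i).IsDiag := by
  simp [pairEdge, Fin.ext_iff]

lemma pairEdge_ne_diag (i : Fin (4 * t ^ 2)) (v : Fin (8 * t ^ 2)) : pairEdge i ≠ Sym2.diag v :=
  fun h => pairEdge_not_isDiag i (h ▸ Sym2.diag_isDiag v)

lemma pairEdge_injective : Function.Injective (pairEdge (t := t)) := by
  intro i i' h
  simp only [pairEdge, Sym2.eq_iff, Fin.ext_iff] at h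
  omega

def partner (v : Fin (8 * t ^ 2)) : Fin (4 * t ^ 2) := ⟨v / 2, by omega⟩

lemma mem_pairEdge_partner (v : Fin (8 * t ^ 2)) : v ∈ pairEdge (partner v) :=
  mem_pairEdge.2 rfl

def jrCommittee (t : ℕ) : Finset (Candidate t) :=
  (univ.map ⟨pairEdge, pairEdge_injective⟩).disjSum ((∅ : Finset (Fin (8 * t ^ 2))).disjSum univ)

lemma card_jrCommittee : #(jrCommittee t) = 8 * t ^ 2 := by
  simp only [jrCommittee, card_disjSum, card_map, card_empty, card_univ, Fintype.card_fin]
  ring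

lemma pairEdge_mem_jrCommittee (i : Fin (4 * t ^ 2)) : Sum.inl (pairEdge i) ∈ jrCommittee t := by
  simp [jrCommittee]

lemma shared_mem_jrCommittee (j : Fin (4 * t ^ 2)) : Sum.inr (Sum.inr j) ∈ jrCommittee t := by
  simp [jrCommittee]

/-- The seats left after the first stage are filled with diagonal `Sym2` candidates, which nobody
approves. -/
def greedyOrder (t : ℕ) (j : Fin (8 * t ^ 2)) : Candidate t :=
  if h₀ : (j : ℕ) = 0 then Sum.inr (Sum.inr ⟨0, by omega⟩)
  else if h : (j : ℕ) ≤ 4 * t ^ 2 then Sum.inl (pairEdge ⟨j - 1, by omega⟩)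
  else Sum.inl (Sym2.diag ⟨j - (4 * t ^ 2 + 1), by omega⟩)

lemma greedyOrder_cases (j : Fin (8 * t ^ 2)) :
    ((j : ℕ) = 0 ∧ ∃ j₀, greedyOrder t j = Sum.inr (Sum.inr j₀)) ∨
    (∃ i : Fin (4 * t ^ 2), (i : ℕ) + 1 = j ∧ greedyOrder t j = Sum.inl (pairEdge i)) ∨
    (∃ v : Fin (8 * t ^ 2), (v : ℕ) + 4 * t ^ 2 + 1 = j ∧
      greedyOrder t j = Sum.inl (Sym2.diag v)) := by
  unfold greedyOrder
  split_ifs with h₀ h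
  · exact .inl ⟨h₀, _, rfl⟩
  · exact .inr (.inl ⟨_, by simp only; omega, rfl⟩)
  · exact .inr (.inr ⟨_, by simp only; omega, rfl⟩)

lemma greedyOrder_injective : Function.Injective (greedyOrder t) := by
  intro a b h
  rcases greedyOrder_cases a with ⟨ha, _, hwa⟩ | ⟨_, ha, hwa⟩ | ⟨_, ha, hwa⟩ <;>
  rcases greedyOrder_cases b with ⟨hb, _, hwb⟩ | ⟨_, hb, hwb⟩ | ⟨_, hb, hwb⟩ <;>
  rw [hwa, hwb] at h <;>
  simp only [reduceCtorEq, Sum.inl.injEq, Sum.inr.injEq, pairEdge_injective.eq_iff,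
    Sym2.diag_injective.eq_iff, pairEdge_ne_diag, (pairEdge_ne_diag _ _).symm,
    Fin.ext_iff] at h ⊢ <;>
  omega

def greedyCommittee (t : ℕ) : Finset (Candidate t) :=
  univ.image (greedyOrder t)

lemma card_greedyCommittee : #(greedyCommittee t) = 8 * t ^ 2 := by
  rw [greedyCommittee, card_image_of_injective _ greedyOrder_injective, card_univ,
    Fintype.card_fin]

def greedyPrefix (t m : ℕ) : Finset (Candidate t) :=
  ({j | (j : ℕ) < m} : Finset (Fin (8 * t ^ 2))).image (greedyOrder t)

lemma exists_shared_mem_greedyPrefix (ht : 0 < t) {m : ℕ} (hm : 0 < m) :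
    ∃ j₀, Sum.inr (Sum.inr j₀) ∈ greedyPrefix t m := by
  obtain ⟨-, j₀, hj₀⟩ | ⟨i, hi, -⟩ | ⟨v, hv, -⟩ :=
    greedyOrder_cases (⟨0, by positivity⟩ : Fin (8 * t ^ 2))
  · exact ⟨j₀, mem_image.2 ⟨_, by simpa using hm, hj₀⟩⟩
  · simp at hi
  · simp at hv

lemma pairEdge_mem_greedyPrefix {m : ℕ} {i : Fin (4 * t ^ 2)} (hi : (i : ℕ) + 1 < m) :
    Sum.inl (pairEdge i) ∈ greedyPrefix t m := by
  obtain ⟨hj, -⟩ | ⟨i', hi', hw⟩ | ⟨v, hv, -⟩ :=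
    greedyOrder_cases (⟨i + 1, by omega⟩ : Fin (8 * t ^ 2))
  · simp at hj
  · obtain rfl : i' = i := Fin.ext (by simpa using hi')
    exact mem_image.2 ⟨_, by simpa using hi, hw⟩
  · simp only at hv
    omega

lemma mem_greedyPrefix {m : ℕ} (hm : m ≤ 4 * t ^ 2 + 1) {c : Candidate t}
    (hc : c ∈ greedyPrefix t m) :
    (∃ j, c = Sum.inr (Sum.inr j)) ∨
      ∃ i : Fin (4 * t ^ 2), (i : ℕ) + 1 < m ∧ c = Sum.inl (pairEdge i) := by
  obtain ⟨j, hj, rfl⟩ := mem_image.1 hc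
  rw [mem_filter] at hj
  obtain ⟨-, j₀, hw⟩ | ⟨i, hi, hw⟩ | ⟨v, hv, -⟩ := greedyOrder_cases j
  · exact .inl ⟨j₀, hw⟩
  · exact .inr ⟨i, by omega, hw⟩
  · omega

namespace IsInstance

variable {A : Voter t → Finset (Candidate t)} {W : Finset (Candidate t)}

lemma left_covered (hA : IsInstance t A) (hW : ∀ i, Sum.inl (pairEdge i) ∈ W)
    (v : Fin (8 * t ^ 2)) : (A (Sum.inl v) ∩ W).Nonempty :=
  ⟨_, mem_inter.2 ⟨(hA.edge_mem_left _ _).2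
    ⟨mem_pairEdge_partner v, pairEdge_not_isDiag _⟩, hW (partner v)⟩⟩

lemma right_covered (hA : IsInstance t A) {j : Fin (4 * t ^ 2)} (hW : Sum.inr (Sum.inr j) ∈ W)
    {v : Fin (8 * t ^ 2)} (hv : (v : ℕ) < 4 * t) : (A (Sum.inr v) ∩ W).Nonempty :=
  ⟨_, mem_inter.2 ⟨(hA.shared_mem_right v j).2 hv, hW⟩⟩

lemma newcov_edge_le_two (hA : IsInstance t A) (e : Sym2 (Fin (8 * t ^ 2))) :
    newcov A (Sum.inl e) W ≤ 2 := by
  induction e using Sym2.ind with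
  | h a b =>
    refine (newcov_le_card A (s := {Sum.inl a, Sum.inl b}) ?_).trans card_le_two
    rintro (v | v) hv _
    · rcases Sym2.mem_iff.1 ((hA.edge_mem_left v _).1 hv).1 with rfl | rfl <;> simp
    · exact absurd hv (hA.edge_not_mem_right v _)

lemma newcov_match_le_two (hA : IsInstance t A) (m : Fin (8 * t ^ 2)) :
    newcov A (Sum.inr (Sum.inl m)) W ≤ 2 := by
  refine (newcov_le_card A (s := {Sum.inl m, Sum.inr m}) ?_).trans card_le_two
  rintro (v | v) hv _
  · simp [(hA.match_mem_left v m).1 hv]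
  · simp [(hA.match_mem_right v m).1 hv]

lemma newcov_shared_eq (hA : IsInstance t A) (j j' : Fin (4 * t ^ 2)) :
    newcov A (Sum.inr (Sum.inr j)) W = newcov A (Sum.inr (Sum.inr j')) W := by
  refine newcov_congr A W fun i => ?_
  rcases i with v | v
  · simp only [hA.shared_not_mem_left]
  · simp only [hA.shared_mem_right]

lemma newcov_le_max (hA : IsInstance t A) (c : Candidate t) (j : Fin (4 * t ^ 2)) :
    newcov A c W ≤ max 2 (newcov A (Sum.inr (Sum.inr j)) W) := by
  rcases c with e | m | j'
  · exact le_max_of_le_left (hA.newcov_edge_le_two e)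
  · exact le_max_of_le_left (hA.newcov_match_le_two m)
  · exact le_max_of_le_right (hA.newcov_shared_eq j' j).le

lemma newcov_shared_eq_zero (hA : IsInstance t A) {j : Fin (4 * t ^ 2)}
    (hW : Sum.inr (Sum.inr j) ∈ W) (j' : Fin (4 * t ^ 2)) :
    newcov A (Sum.inr (Sum.inr j')) W = 0 := by
  refine Nat.le_zero.1 (newcov_le_card A (s := ∅) ?_)
  rintro (v | v) hv hunc
  · exact absurd hv (hA.shared_not_mem_left v j')
  · exact absurd hunc (hA.right_covered hW ((hA.shared_mem_right v j').1 hv)).ne_empty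

lemma two_le_newcov_shared_empty (hA : IsInstance t A) (ht : 0 < t) (j : Fin (4 * t ^ 2)) :
    2 ≤ newcov A (Sum.inr (Sum.inr j)) ∅ := by
  have h8 : 4 * t ≤ 8 * t ^ 2 := by nlinarith
  have happ (v : Fin (8 * t ^ 2)) (hv : (v : ℕ) < 4 * t) :
      Sum.inr (Sum.inr j) ∈ A (Sum.inr v) ∧ A (Sum.inr v) ∩ ∅ = ∅ :=
    ⟨(hA.shared_mem_right v j).2 hv, inter_empty _⟩
  exact two_le_newcov A (i := Sum.inr ⟨0, by omega⟩) (i' := Sum.inr ⟨1, by omega⟩)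
    (by simp [Fin.ext_iff]) (happ _ (by simp only; omega)) (happ _ (by simp only; omega))

lemma two_le_newcov_pairEdge (hA : IsInstance t A) {i : Fin (4 * t ^ 2)}
    (hW : ∀ c ∈ W, (∃ j, c = Sum.inr (Sum.inr j)) ∨ ∃ i' < i, c = Sum.inl (pairEdge i')) :
    2 ≤ newcov A (Sum.inl (pairEdge i)) W := by
  have hend (v : Fin (8 * t ^ 2)) (hv : (v : ℕ) / 2 = i) :
      Sum.inl (pairEdge i) ∈ A (Sum.inl v) ∧ A (Sum.inl v) ∩ W = ∅ := by
    refine ⟨(hA.edge_mem_left v _).2 ⟨mem_pairEdge.2 hv, pairEdge_not_isDiag i⟩, ?_⟩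
    refine eq_empty_of_forall_notMem fun c hc => ?_
    obtain ⟨hcA, hcW⟩ := mem_inter.1 hc
    rcases hW c hcW with ⟨j, rfl⟩ | ⟨i', hi', rfl⟩
    · exact hA.shared_not_mem_left v j hcA
    · have := mem_pairEdge.1 ((hA.edge_mem_left v _).1 hcA).1
      rw [Fin.lt_def] at hi'
      omega
  exact two_le_newcov A (i := Sum.inl ⟨2 * i, by omega⟩) (i' := Sum.inl ⟨2 * i + 1, by omega⟩)
    (by simp [Fin.ext_iff]) (hend _ (by simp)) (hend _ (by simp only; omega))

lemma newcov_le_one (hA : IsInstance t A) {j : Fin (4 * t ^ 2)} (hj : Sum.inr (Sum.inr j) ∈ W)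
    (hW : ∀ i, Sum.inl (pairEdge i) ∈ W) (c : Candidate t) : newcov A c W ≤ 1 := by
  rcases c with e | m | j'
  · refine (newcov_le_card A (s := ∅) ?_).trans zero_le_one
    rintro (v | v) hv hunc
    · exact absurd hunc (hA.left_covered hW v).ne_empty
    · exact absurd hv (hA.edge_not_mem_right v e)
  · refine (newcov_le_card A (s := {Sum.inr m}) ?_).trans (card_singleton _).le
    rintro (v | v) hv hunc
    · exact absurd hunc (hA.left_covered hW v).ne_empty
    · simp [(hA.match_mem_right v m).1 hv]
  · exact (hA.newcov_shared_eq_zero hj j').trans_le zero_le_one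

lemma providesJR_jrCommittee (hA : IsInstance t A) (ht : 0 < t) :
    providesJR A (8 * t ^ 2) (jrCommittee t) := by
  have hL := hA.left_covered pairEdge_mem_jrCommittee
  refine providesJR_of_pair A (by simp only [Fintype.card_sum, Fintype.card_fin]; nlinarith) ?_
  rintro c (v | v) (v' | v') hne hc hc'
  · exact .inl (hL v)
  · exact .inl (hL v)
  · exact .inr (hL v')
  rcases c with e | m | j
  · exact absurd hc (hA.edge_not_mem_right v e)
  · rw [hA.match_mem_right] at hc hc'
    exact absurd (hc ▸ hc' ▸ rfl) hne
  · exact .inl ⟨_, mem_inter.2 ⟨hc, shared_mem_jrCommittee j⟩⟩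

lemma le_swF_jrCommittee (hA : IsInstance t A) :
    16 * t ^ 3 + 8 * t ^ 2 ≤ swF A (jrCommittee t) := by
  set R := ({v | (v : ℕ) < 4 * t} : Finset (Fin (8 * t ^ 2)))
  have hR : 4 * t ≤ #R := by
    have h8 : 4 * t ≤ 8 * t ^ 2 := by nlinarith
    simpa using card_le_card_of_injOn (s := (univ : Finset (Fin (4 * t))))
      (fun v => (⟨v, by omega⟩ : Fin (8 * t ^ 2))) (fun v _ => by simp [R])
      (fun _ _ _ _ h => by simpa [Fin.ext_iff] using h)
  have hshared (v) (hv : v ∈ R) : 4 * t ^ 2 ≤ #(A (Sum.inr v) ∩ jrCommittee t) := by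
    simpa using card_le_card_of_injOn (s := (univ : Finset (Fin (4 * t ^ 2))))
      (fun j => Sum.inr (Sum.inr j))
      (fun j _ => mem_inter.2 ⟨(hA.shared_mem_right v j).2 (by simpa [R] using hv),
        shared_mem_jrCommittee j⟩)
      (fun _ _ _ _ h => by simpa using h)
  have hleft (v) : 1 ≤ #(A (Sum.inl v) ∩ jrCommittee t) :=
    card_pos.2 (hA.left_covered pairEdge_mem_jrCommittee v)
  rw [swF, Fintype.sum_sum_type]
  calc 16 * t ^ 3 + 8 * t ^ 2 ≤ ∑ _v : Fin (8 * t ^ 2), 1 + ∑ _v ∈ R, 4 * t ^ 2 := by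
        simp only [sum_const, card_univ, Fintype.card_fin, smul_eq_mul]
        nlinarith
    _ ≤ _ := add_le_add (sum_le_sum fun v _ => hleft v)
        ((sum_le_sum hshared).trans (sum_le_sum_of_subset (subset_univ R)))

lemma isGreedyCCRun_greedyCommittee (hA : IsInstance t A) (ht : 0 < t) :
    IsGreedyCCRun A (8 * t ^ 2) (greedyCommittee t) := by
  refine ⟨greedyOrder t, greedyOrder_injective, rfl, 4 * t ^ 2 + 1, by nlinarith,
    fun j hj => ?_, ?_⟩
  · change 2 ≤ newcov A _ (greedyPrefix t j) ∧
      ∀ c, newcov A c (greedyPrefix t j) ≤ newcov A _ (greedyPrefix t j)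
    obtain ⟨hj0, j₀, hw⟩ | ⟨i, hij, hw⟩ | ⟨v, hv, -⟩ := greedyOrder_cases j
    · have hP : greedyPrefix t j = ∅ := by simp [greedyPrefix, hj0]
      rw [hP, hw]
      have h2 := hA.two_le_newcov_shared_empty ht j₀
      exact ⟨h2, fun c => (hA.newcov_le_max c j₀).trans (max_le h2 le_rfl)⟩
    · obtain ⟨j₀, hj₀⟩ := exists_shared_mem_greedyPrefix ht (by omega : 0 < (j : ℕ))
      have h2 := hA.two_le_newcov_pairEdge (W := greedyPrefix t j) (i := i) fun c hc => by
        rcases mem_greedyPrefix (by omega) hc with hc | ⟨i', hi', hc⟩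
        exacts [.inl hc, .inr ⟨i', by rw [Fin.lt_def]; omega, hc⟩]
      rw [hw]
      refine ⟨h2, fun c => (hA.newcov_le_max c j₀).trans ?_⟩
      rw [hA.newcov_shared_eq_zero hj₀]
      exact max_le h2 (Nat.zero_le _)
    · omega
  · change ∀ c, newcov A c (greedyPrefix t (4 * t ^ 2 + 1)) < 2
    obtain ⟨j₀, hj₀⟩ := exists_shared_mem_greedyPrefix ht (Nat.succ_pos (4 * t ^ 2))
    exact fun c => Nat.lt_succ_of_le <| hA.newcov_le_one hj₀
      (fun i => pairEdge_mem_greedyPrefix (by omega)) c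

lemma val_eq_of_greedyOrder_mem (hA : IsInstance t A) {i : Voter t} {j : Fin (8 * t ^ 2)}
    (h : greedyOrder t j ∈ A i) :
    (j : ℕ) = Sum.elim (fun v : Fin (8 * t ^ 2) => (v : ℕ) / 2 + 1) (fun _ => 0) i := by
  obtain ⟨hj, j₀, hw⟩ | ⟨e, he, hw⟩ | ⟨u, -, hw⟩ := greedyOrder_cases j <;>
    rw [hw] at h <;> rcases i with v | v
  · exact absurd h (hA.shared_not_mem_left v j₀)
  · exact hj
  · have := mem_pairEdge.1 ((hA.edge_mem_left v _).1 h).1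
    simp only [Sum.elim_inl]
    omega
  · exact absurd h (hA.edge_not_mem_right v _)
  · exact absurd (Sym2.diag_isDiag u) ((hA.edge_mem_left v _).1 h).2
  · exact absurd h (hA.edge_not_mem_right v _)

lemma swF_greedyCommittee_le (hA : IsInstance t A) :
    swF A (greedyCommittee t) ≤ 16 * t ^ 2 := by
  refine (swF_le_card A fun i => card_le_one.2 fun c hc c' hc' => ?_).trans (by simp; omega)
  obtain ⟨hcA, hcW⟩ := mem_inter.1 hc
  obtain ⟨hcA', hcW'⟩ := mem_inter.1 hc'
  obtain ⟨a, -, rfl⟩ := mem_image.1 hcW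
  obtain ⟨b, -, rfl⟩ := mem_image.1 hcW'
  rw [Fin.ext ((hA.val_eq_of_greedyOrder_mem hcA).trans (hA.val_eq_of_greedyOrder_mem hcA').symm)]

end IsInstance

end CliqueMatching

/-- The instance separating GreedyCC from the optimal JR social welfare:
`n = 16t²` voters (`L ⊕ R`, each of size `n/2 = 8t²`), candidates are clique
edges inside `L` (non-diagonal `Sym2`), the perfect matching edges between `L`
and `R` (`Fin (8t²)`), and a set `S` of `n/4 = 4t²` candidates each approved by
the same `√n = 4t` voters of `R`; committee size `k = n/2 = 8t²`. Some JR
committee has social welfare at least `(n/4)·√n + n/2 = 16t³ + 8t²`, while some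
GreedyCC run outputs a committee of social welfare at most `2n = 32t²`. -/
theorem stmt12 (t : ℕ) (ht : 0 < t)
    (A : Fin (8 * t ^ 2) ⊕ Fin (8 * t ^ 2) →
      Finset (Sym2 (Fin (8 * t ^ 2)) ⊕ Fin (8 * t ^ 2) ⊕ Fin (4 * t ^ 2)))
    (h1 : ∀ (v : Fin (8 * t ^ 2)) (e : Sym2 (Fin (8 * t ^ 2))),
      Sum.inl e ∈ A (Sum.inl v) ↔ (v ∈ e ∧ ¬ e.IsDiag))
    (h2 : ∀ (v j : Fin (8 * t ^ 2)), Sum.inr (Sum.inl j) ∈ A (Sum.inl v) ↔ j = v)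
    (h3 : ∀ (v : Fin (8 * t ^ 2)) (j : Fin (4 * t ^ 2)),
      Sum.inr (Sum.inr j) ∉ A (Sum.inl v))
    (h4 : ∀ (v : Fin (8 * t ^ 2)) (e : Sym2 (Fin (8 * t ^ 2))),
      Sum.inl e ∉ A (Sum.inr v))
    (h5 : ∀ (v j : Fin (8 * t ^ 2)), Sum.inr (Sum.inl j) ∈ A (Sum.inr v) ↔ j = v)
    (h6 : ∀ (v : Fin (8 * t ^ 2)) (j : Fin (4 * t ^ 2)),
      Sum.inr (Sum.inr j) ∈ A (Sum.inr v) ↔ (v : ℕ) < 4 * t) :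
    (∃ W, W.card = 8 * t ^ 2 ∧ providesJR A (8 * t ^ 2) W ∧
      16 * t ^ 3 + 8 * t ^ 2 ≤ swF A W) ∧
    (∃ W, W.card = 8 * t ^ 2 ∧ IsGreedyCCRun A (8 * t ^ 2) W ∧
      swF A W ≤ 32 * t ^ 2) := by
  have hA : CliqueMatching.IsInstance t A := ⟨h1, h2, h3, h4, h5, h6⟩
  exact ⟨⟨CliqueMatching.jrCommittee t, CliqueMatching.card_jrCommittee,
      hA.providesJR_jrCommittee ht, hA.le_swF_jrCommittee⟩,
    ⟨CliqueMatching.greedyCommittee t, CliqueMatching.card_greedyCommittee,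
      hA.isGreedyCCRun_greedyCommittee ht, hA.swF_greedyCommittee_le.trans (by nlinarith)⟩⟩
end

section
/- Let I = (C, A, k) be a 1D-VCR instance and C* the set of candidates whose intervals are maximal (not strictly contained in any other candidate's interval). For any W ⊆ C*, W provides JR with respect to the restricted instance I* = (C*, A|_{C*}, k) if and only if W provides JR with respect to the full instance I. -/
/-- In a 1D-VCR instance (voter `i` has interval `[sv i, tv i]`, candidate `c`
has interval `[sc c, tc c]`, approval = interval intersection), let `Cstar` be
the set of candidates whose intervals are maximal (not strictly contained in
another candidate's interval). For any committee `W ⊆ Cstar`, `W` provides JR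
with respect to the restricted instance (cohesive groups witnessed by
candidates in `Cstar`) iff it provides JR with respect to the full instance. -/
theorem stmt15 {V C : Type*} [Fintype V] [Fintype C] [DecidableEq C]
    (sv tv : V → ℝ) (sc tc : C → ℝ) (k : ℕ) (Cstar : Finset C)
    (hCstar : ∀ c : C, c ∈ Cstar ↔
      ¬ ∃ c' : C, sc c' ≤ sc c ∧ tc c ≤ tc c' ∧ (sc c' < sc c ∨ tc c < tc c'))
    (W : Finset C) (hW : W ⊆ Cstar) :
    ((∀ N' : Finset V, Fintype.card V ≤ k * N'.card →
        (∃ c ∈ Cstar, ∀ i ∈ N', sc c ≤ tv i ∧ sv i ≤ tc c) →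
        ∃ i ∈ N', ∃ c ∈ W, sc c ≤ tv i ∧ sv i ≤ tc c) ↔
      (∀ N' : Finset V, Fintype.card V ≤ k * N'.card →
        (∃ c : C, ∀ i ∈ N', sc c ≤ tv i ∧ sv i ≤ tc c) →
        ∃ i ∈ N', ∃ c ∈ W, sc c ≤ tv i ∧ sv i ≤ tc c)) := by
  classical
  -- key lemma: every candidate's interval is contained in a maximal one
  have key : ∀ c : C, ∃ m ∈ Cstar, sc m ≤ sc c ∧ tc c ≤ tc m := by
    intro c
    set S : Finset C := Finset.univ.filter (fun c' => sc c' ≤ sc c ∧ tc c ≤ tc c') with hS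
    have hcS : c ∈ S := by simp [hS]
    obtain ⟨m, hmS, hmin⟩ := S.exists_min_image (fun c' => sc c' - tc c') ⟨c, hcS⟩
    simp only [hS, Finset.mem_filter, Finset.mem_univ, true_and] at hmS
    refine ⟨m, ?_, hmS.1, hmS.2⟩
    rw [hCstar]
    rintro ⟨c', h1, h2, h3⟩
    have hc'S : c' ∈ S := by
      simp only [hS, Finset.mem_filter, Finset.mem_univ, true_and]
      exact ⟨h1.trans hmS.1, hmS.2.trans h2⟩
    have := hmin c' hc'S
    rcases h3 with h | h <;> linarith
  constructor
  · intro h N' hsize ⟨c, hc⟩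
    obtain ⟨m, hm, hm1, hm2⟩ := key c
    exact h N' hsize ⟨m, hm, fun i hi => ⟨hm1.trans (hc i hi).1, (hc i hi).2.trans hm2⟩⟩
  · intro h N' hsize ⟨c, _, hc⟩
    exact h N' hsize ⟨c, hc⟩
end

section
/- Let N_O be a finite set of voters covered by a size-k committee O, and let 0 ≤ r ≤ k. For any subset N'' ⊆ N_O, there exists O' ⊆ O with |O'| = r such that O' covers at least (r/k)·|N''| voters of N''. -/
/-!
Assign every voter of `N''` to one candidate of `O` they approve, and weigh each candidate by the
number of voters assigned to it; the weights sum to `|N''|`. The `r` heaviest candidates carry at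
least the fraction `r / k` of the total weight, since each of them outweighs each of the other
`k - r`, and every voter assigned to one of them is covered.
-/

open Finset

namespace Finset

variable {ι : Type*} [DecidableEq ι]

lemma exists_subset_card_eq_forall_sdiff_le {α : Type*} [LinearOrder α] (w : ι → α)
    {s : Finset ι} {r : ℕ} (hr : r ≤ #s) :
    ∃ t ⊆ s, #t = r ∧ ∀ a ∈ t, ∀ b ∈ s \ t, w b ≤ w a := by
  induction r with
  | zero => exact ⟨∅, empty_subset s, card_empty, by simp⟩
  | succ r ih =>
    obtain ⟨t, hts, rfl, htop⟩ := ih (by omega)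
    have hrest : (s \ t).Nonempty := by
      rw [← card_pos, card_sdiff_of_subset hts]
      omega
    obtain ⟨m, hm, hmax⟩ := exists_max_image (s \ t) w hrest
    rw [mem_sdiff] at hm
    refine ⟨insert m t, insert_subset hm.1 hts, card_insert_of_notMem hm.2, ?_⟩
    intro a ha b hb
    rw [sdiff_insert] at hb
    rcases mem_insert.1 ha with rfl | ha
    · exact hmax b (mem_of_mem_erase hb)
    · exact htop a ha b (mem_of_mem_erase hb)

lemma card_smul_sum_le_card_smul_sum_of_forall_sdiff_le {M : Type*} [AddCommMonoid M]
    [PartialOrder M] [IsOrderedAddMonoid M] (w : ι → M) {s t : Finset ι}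
    (hts : t ⊆ s) (htop : ∀ a ∈ t, ∀ b ∈ s \ t, w b ≤ w a) :
    #t • ∑ i ∈ s, w i ≤ #s • ∑ i ∈ t, w i := by
  have hcross : #t • ∑ b ∈ s \ t, w b ≤ #(s \ t) • ∑ a ∈ t, w a :=
    calc #t • ∑ b ∈ s \ t, w b = ∑ _a ∈ t, ∑ b ∈ s \ t, w b := (sum_const _).symm
      _ ≤ ∑ a ∈ t, ∑ _b ∈ s \ t, w a :=
        sum_le_sum fun a ha => sum_le_sum fun b hb => htop a ha b hb
      _ = #(s \ t) • ∑ a ∈ t, w a := by rw [sum_comm, sum_const]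
  calc #t • ∑ i ∈ s, w i = #t • ∑ b ∈ s \ t, w b + #t • ∑ a ∈ t, w a := by
        rw [← sum_sdiff hts, smul_add]
    _ ≤ #(s \ t) • ∑ a ∈ t, w a + #t • ∑ a ∈ t, w a := by gcongr
    _ = #s • ∑ i ∈ t, w i := by rw [← add_smul, card_sdiff_add_card_eq_card hts]

lemma exists_subset_card_eq_card_smul_sum_le {M : Type*} [AddCommMonoid M] [LinearOrder M]
    [IsOrderedAddMonoid M] (w : ι → M) {s : Finset ι} {r : ℕ} (hr : r ≤ #s) :
    ∃ t ⊆ s, #t = r ∧ r • ∑ i ∈ s, w i ≤ #s • ∑ i ∈ t, w i := by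
  obtain ⟨t, hts, rfl, htop⟩ := exists_subset_card_eq_forall_sdiff_le w hr
  exact ⟨t, hts, rfl, card_smul_sum_le_card_smul_sum_of_forall_sdiff_le w hts htop⟩

end Finset

theorem exists_subset_card_eq_mul_card_le_card_filter_inter_nonempty {V C : Type*}
    [DecidableEq C] (A : V → Finset C) {O : Finset C} {N : Finset V}
    (hN : ∀ i ∈ N, (A i ∩ O).Nonempty) {r : ℕ} (hr : r ≤ #O) :
    ∃ S ⊆ O, #S = r ∧ r * #N ≤ #O * #{i ∈ N | (A i ∩ S).Nonempty} := by
  choose f hf using fun i : N => hN i i.2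
  obtain ⟨S, hSO, rfl, hS⟩ :=
    exists_subset_card_eq_card_smul_sum_le (fun c => #{i ∈ N.attach | f i = c}) hr
  rw [← card_eq_sum_card_fiberwise fun i _ => (mem_inter.1 (hf i)).2, card_attach,
    sum_card_fiberwise_eq_card_filter, smul_eq_mul, smul_eq_mul] at hS
  refine ⟨S, hSO, rfl, hS.trans (Nat.mul_le_mul_left _ ?_)⟩
  refine card_le_card_of_injOn Subtype.val (fun i hi => ?_) Subtype.val_injective.injOn
  exact mem_filter.2 ⟨i.2, f i, mem_inter.2 ⟨(mem_inter.1 (hf i)).1, (mem_filter.1 hi).2⟩⟩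

theorem stmt16_general {V C : Type*} [DecidableEq C]
    (A : V → Finset C) (O : Finset C) (k r : ℕ) (hO : O.card = k) (hr : r ≤ k)
    (NO : Finset V) (hNO : ∀ i ∈ NO, ((A i) ∩ O).Nonempty)
    (N'' : Finset V) (hN'' : N'' ⊆ NO) :
    ∃ O' ⊆ O, O'.card = r ∧
      ((r : ℝ) / (k : ℝ)) * (N''.card : ℝ) ≤
        ((N''.filter (fun i => ((A i) ∩ O').Nonempty)).card : ℝ) := by
  obtain ⟨O', hO'O, hO'r, hcov⟩ := exists_subset_card_eq_mul_card_le_card_filter_inter_nonempty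
    A (fun i hi => hNO i (hN'' hi)) (hr.trans hO.ge)
  refine ⟨O', hO'O, hO'r, ?_⟩
  rw [hO] at hcov
  rcases (Nat.zero_le k).eq_or_lt with rfl | hk
  · simp
  rw [div_mul_eq_mul_div, div_le_iff₀ (by positivity)]
  exact_mod_cast hcov.trans_eq (mul_comm _ _)

/-- Averaging argument: if `N''` is a subset of the voters covered by a size-`k`
committee `O`, then for any `r ≤ k` there is a size-`r` subset `O' ⊆ O`
covering at least `(r/k)·|N''|` voters of `N''`. -/
theorem stmt16 {V C : Type*} [Fintype V] [DecidableEq V] [DecidableEq C]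
    (A : V → Finset C) (O : Finset C) (k r : ℕ) (hO : O.card = k) (hr : r ≤ k)
    (NO : Finset V) (hNO : ∀ i ∈ NO, ((A i) ∩ O).Nonempty)
    (N'' : Finset V) (hN'' : N'' ⊆ NO) :
    ∃ O' ⊆ O, O'.card = r ∧
      ((r : ℝ) / (k : ℝ)) * (N''.card : ℝ) ≤
        ((N''.filter (fun i => ((A i) ∩ O').Nonempty)).card : ℝ) :=
  stmt16_general A O k r hO hr NO hNO N'' hN''
end

section
/- In the EJR lower-bound instance: k = 2t, candidates {a_1,...,a_{k/2}} ∪ {b_1,...,b_k}, n = 2k voters where the first k voters each approve all of {a_1,...,a_{k/2}} and each of the last k voters approves a distinct b_j. Then (a) every committee providing EJR contains all of a_1,...,a_{k/2} and covers exactly 3k/2 voters, while (b) some size-k committee covers 2k−1 voters. Hence the coverage price of EJR on this instance is (2k−1)/(3k/2). -/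
/-- Coverage of a committee `W`. -/
def cvrF {V C : Type*} [Fintype V] [DecidableEq C] (A : V → Finset C) (W : Finset C) : ℕ :=
  (Finset.univ.filter (fun i : V => ((A i) ∩ W).Nonempty)).card

/-- `W` provides extended justified representation: for each `ℓ ∈ [k]`, every
`ℓ`-cohesive group of at least `ℓ·n/k` voters contains a voter approving at
least `ℓ` members of `W`. -/
def providesEJR {V C : Type*} [Fintype V] [DecidableEq C] (A : V → Finset C)
    (k : ℕ) (W : Finset C) : Prop :=
  ∀ ℓ : ℕ, 1 ≤ ℓ → ℓ ≤ k → ∀ N' : Finset V,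
    ℓ * Fintype.card V ≤ k * N'.card →
    (∃ B : Finset C, ℓ ≤ B.card ∧ ∀ i ∈ N', B ⊆ A i) →
    ∃ i ∈ N', ℓ ≤ ((A i) ∩ W).card

lemma singleton_inter_nonempty_iff {α : Type*} [DecidableEq α] (a : α) (s : Finset α) :
    (({a} : Finset α) ∩ s).Nonempty ↔ a ∈ s := by
  constructor
  · rintro ⟨c, hc⟩
    rw [Finset.mem_inter, Finset.mem_singleton] at hc
    rcases hc with ⟨rfl, h⟩; exact h
  · intro h
    exact ⟨a, Finset.mem_inter.mpr ⟨Finset.mem_singleton_self a, h⟩⟩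

/-- EJR lower-bound instance: `k = 2t`, candidates `a_1,…,a_t` (`Sum.inl`) and
`b_1,…,b_{2t}` (`Sum.inr`), `n = 2k = 4t` voters; the first `2t` voters approve
all `a`-candidates and each of the last `2t` voters approves a distinct `b`.
Every size-`k` EJR committee contains all `a`-candidates and covers exactly
`3t = 3k/2` voters, while some size-`k` committee covers `2k − 1` voters. -/
theorem stmt18 (t : ℕ) (ht : 0 < t)
    (A : Fin (2 * t) ⊕ Fin (2 * t) → Finset (Fin t ⊕ Fin (2 * t)))
    (hA1 : ∀ i : Fin (2 * t), A (Sum.inl i) =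
      Finset.univ.image (Sum.inl : Fin t → Fin t ⊕ Fin (2 * t)))
    (hA2 : ∀ i : Fin (2 * t), A (Sum.inr i) = {Sum.inr i}) :
    (∀ W : Finset (Fin t ⊕ Fin (2 * t)), W.card = 2 * t →
      providesEJR A (2 * t) W →
      (∀ j : Fin t, Sum.inl j ∈ W) ∧ cvrF A W = 3 * t) ∧
    ∃ W : Finset (Fin t ⊕ Fin (2 * t)), W.card = 2 * t ∧
      cvrF A W = 2 * (2 * t) - 1 := by
  have h2t : 0 < 2 * t := by omega
  constructor
  · intro W hW hEJR
    obtain ⟨i, hiN, hi⟩ := hEJR t ht (by omega)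
      (Finset.univ.image (Sum.inl : Fin (2*t) → Fin (2*t) ⊕ Fin (2*t)))
      (by
        rw [Finset.card_image_of_injective _ Sum.inl_injective]
        simp [Fintype.card_sum]
        nlinarith)
      ⟨Finset.univ.image (Sum.inl : Fin t → Fin t ⊕ Fin (2*t)), by
        constructor
        · rw [Finset.card_image_of_injective _ Sum.inl_injective]; simp
        · intro j hj
          simp only [Finset.mem_image] at hj
          obtain ⟨x, -, rfl⟩ := hj
          rw [hA1]⟩
    simp only [Finset.mem_image] at hiN
    obtain ⟨x, -, rfl⟩ := hiN
    rw [hA1] at hi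
    have hcard : (Finset.univ.image (Sum.inl : Fin t → Fin t ⊕ Fin (2*t))).card = t := by
      rw [Finset.card_image_of_injective _ Sum.inl_injective]; simp
    have heq : (Finset.univ.image (Sum.inl : Fin t → Fin t ⊕ Fin (2*t))) ∩ W
        = Finset.univ.image (Sum.inl : Fin t → Fin t ⊕ Fin (2*t)) := by
      apply Finset.eq_of_subset_of_card_le Finset.inter_subset_left
      calc (Finset.univ.image (Sum.inl : Fin t → Fin t ⊕ Fin (2*t))).card = t := hcard
        _ ≤ _ := hi
    have hal : ∀ j : Fin t, Sum.inl j ∈ W := by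
      intro j
      have : Sum.inl j ∈ (Finset.univ.image (Sum.inl : Fin t → Fin t ⊕ Fin (2*t))) ∩ W := by
        rw [heq]; simp
      exact (Finset.mem_inter.mp this).2
    refine ⟨hal, ?_⟩
    unfold cvrF
    have hset : Finset.univ.filter (fun i => ((A i) ∩ W).Nonempty)
        = Finset.univ.image (Sum.inl : Fin (2*t) → Fin (2*t) ⊕ Fin (2*t)) ∪
          (Finset.univ.filter (fun i : Fin (2*t) => Sum.inr i ∈ W)).image Sum.inr := by
      ext v
      rcases v with x | x
      · simp only [Finset.mem_filter, Finset.mem_univ, true_and, Finset.mem_union, hA1]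
        constructor
        · intro _
          exact Or.inl (Finset.mem_image_of_mem _ (Finset.mem_univ x))
        · intro _
          exact ⟨Sum.inl ⟨0, ht⟩, Finset.mem_inter.mpr
            ⟨Finset.mem_image_of_mem _ (Finset.mem_univ _), hal ⟨0, ht⟩⟩⟩
      · simp only [Finset.mem_filter, Finset.mem_univ, true_and, hA2,
          singleton_inter_nonempty_iff, Finset.mem_union, Finset.mem_image,
          Finset.mem_filter]
        constructor
        · intro h
          exact Or.inr ⟨x, h, rfl⟩
        · rintro (⟨y, h⟩ | ⟨y, hy, h⟩)
          · exact absurd h (by simp)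
          · have hyx : y = x := Sum.inr_injective h
            subst hyx; exact hy
    rw [hset, Finset.card_union_of_disjoint]
    · rw [Finset.card_image_of_injective _ Sum.inl_injective,
        Finset.card_image_of_injective _ Sum.inr_injective]
      have hWr : ((Finset.univ.filter (fun i : Fin (2*t) => Sum.inr i ∈ W)).image
          (Sum.inr : Fin (2*t) → Fin t ⊕ Fin (2*t))) = W.filter (fun c => c.isRight) := by
        ext c
        rcases c with y | y
        · simp
        · simp
      have h1 : (Finset.univ.filter (fun i : Fin (2*t) => Sum.inr i ∈ W)).card
          = (W.filter (fun c => c.isRight)).card := by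
        rw [← hWr, Finset.card_image_of_injective _ Sum.inr_injective]
      have hWl : W.filter (fun c => c.isLeft)
          = Finset.univ.image (Sum.inl : Fin t → Fin t ⊕ Fin (2*t)) := by
        ext c
        rcases c with y | y
        · simp [hal y]
        · simp
      have h2 : (W.filter (fun c => c.isLeft)).card + (W.filter (fun c => c.isRight)).card
          = W.card := by
        rw [← Finset.card_union_of_disjoint]
        · congr 1
          ext c; rcases c with y | y <;> simp
        · rw [Finset.disjoint_left]
          rintro (y | y) hy hy' <;> simp_all
      rw [hWl, hcard] at h2
      simp only [Finset.card_univ, Fintype.card_fin, h1]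
      omega
    · rw [Finset.disjoint_left]
      rintro c hc hc'
      simp only [Finset.mem_image] at hc hc'
      obtain ⟨y, -, rfl⟩ := hc
      obtain ⟨z, -, h⟩ := hc'
      exact Sum.inl_ne_inr h.symm
  · refine ⟨insert (Sum.inl ⟨0, ht⟩)
      ((Finset.univ.erase (⟨0, h2t⟩ : Fin (2*t))).image (Sum.inr : Fin (2*t) → Fin t ⊕ Fin (2*t))),
      ?_, ?_⟩
    · rw [Finset.card_insert_of_notMem (by simp),
        Finset.card_image_of_injective _ Sum.inr_injective,
        Finset.card_erase_of_mem (Finset.mem_univ _)]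
      simp only [Finset.card_univ, Fintype.card_fin]
      omega
    · unfold cvrF
      have hset : Finset.univ.filter (fun i => ((A i) ∩ (insert (Sum.inl ⟨0, ht⟩)
          ((Finset.univ.erase (⟨0, h2t⟩ : Fin (2*t))).image (Sum.inr : Fin (2*t) → Fin t ⊕ Fin (2*t))))).Nonempty)
          = Finset.univ.image (Sum.inl : Fin (2*t) → Fin (2*t) ⊕ Fin (2*t)) ∪
            (Finset.univ.erase (⟨0, h2t⟩ : Fin (2*t))).image Sum.inr := by
        ext v
        rcases v with x | x
        · simp only [Finset.mem_filter, Finset.mem_univ, true_and, Finset.mem_union, hA1]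
          constructor
          · intro _
            exact Or.inl (Finset.mem_image_of_mem _ (Finset.mem_univ x))
          · intro _
            exact ⟨Sum.inl ⟨0, ht⟩, Finset.mem_inter.mpr
              ⟨Finset.mem_image_of_mem _ (Finset.mem_univ _), Finset.mem_insert_self _ _⟩⟩
        · simp only [Finset.mem_filter, Finset.mem_univ, true_and, hA2,
            singleton_inter_nonempty_iff, Finset.mem_union, Finset.mem_image,
            Finset.mem_insert]
          constructor
          · rintro (h | ⟨y, hy, h⟩)
            · exact absurd h (by simp)
            · have hyx : y = x := Sum.inr_injective h
              subst hyx; exact Or.inr ⟨y, hy, rfl⟩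
          · rintro (⟨y, h⟩ | ⟨y, hy, h⟩)
            · exact absurd h (by simp)
            · have hyx : y = x := Sum.inr_injective h
              subst hyx; exact Or.inr ⟨y, hy, rfl⟩
      rw [hset, Finset.card_union_of_disjoint]
      · rw [Finset.card_image_of_injective _ Sum.inl_injective,
          Finset.card_image_of_injective _ Sum.inr_injective,
          Finset.card_erase_of_mem (Finset.mem_univ _)]
        simp only [Finset.card_univ, Fintype.card_fin]
        omega
      · rw [Finset.disjoint_left]
        rintro c hc hc'
        simp only [Finset.mem_image] at hc hc'
        obtain ⟨y, -, rfl⟩ := hc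
        obtain ⟨z, -, h⟩ := hc'
        exact Sum.inl_ne_inr h.symm
end
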